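/- arXiv:2203.12251 — 2 statements merged into one kernel-verified Lean document; each statement's English description precedes it below -/
import Mathlib

section
/- For every ε > 0, a compact metric space X admits a finite open cover U with diam(U) ≤ ε and Lebesgue number Leb(U) ≥ ε/4. -/
open MeasureTheory Filter Set Metric Topology ENNReal

variable {X : Type*} [MetricSpace X]

/-- The `n`-th Bowen metric `d_n(x,y) = max_{0 ≤ j ≤ n-1} d(T^j x, T^j y)`. -/
noncomputable def bowenDist (T : X → X) (n : ℕ) (x y : X) : ℝ :=
  ⨆ j ∈ Finset.range n, dist (T^[j] x) (T^[j] y)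

/-- The open Bowen ball of order `n` and radius `ε`. -/
def bowenBall (T : X → X) (n : ℕ) (x : X) (ε : ℝ) : Set X :=
  {y | bowenDist T n x y < ε}

/-- The closed Bowen ball of order `n` and radius `ε`. -/
def bowenClosedBall (T : X → X) (n : ℕ) (x : X) (ε : ℝ) : Set X :=
  {y | bowenDist T n x y ≤ ε}

/-- `F` is `(n,ε)`-separated. -/
def IsBowenSeparated (T : X → X) (n : ℕ) (ε : ℝ) (F : Set X) : Prop :=
  ∀ x ∈ F, ∀ y ∈ F, x ≠ y → ε < bowenDist T n x y

/-- Maximal cardinality of an `(n,ε)`-separated subset of `Z`. -/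
noncomputable def sepNum (T : X → X) (n : ℕ) (ε : ℝ) (Z : Set X) : ℕ :=
  sSup {k | ∃ F : Finset X, ↑F ⊆ Z ∧ IsBowenSeparated T n ε ↑F ∧ F.card = k}

/-- A finite Borel measurable partition of `X`. -/
def IsMeasPartition [MeasurableSpace X] (P : Finset (Set X)) : Prop :=
  (∀ A ∈ P, MeasurableSet A) ∧ (∀ A ∈ P, ∀ B ∈ P, A ≠ B → Disjoint A B) ∧
    (⋃ A ∈ P, A) = Set.univ

/-- A finite open cover of `X`. -/
def IsOpenCover (U : Finset (Set X)) : Prop :=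
  (∀ A ∈ U, IsOpen A) ∧ (⋃ A ∈ U, A) = Set.univ

/-- The `n`-th join `⋁_{j=0}^{n-1} T^{-j} P` of a finite family of sets. -/
noncomputable def joinPart (T : X → X) (P : Finset (Set X)) (n : ℕ) : Finset (Set X) := by
  classical
  exact (Fintype.piFinset (fun _ : Fin n => P)).image
    (fun f => ⋂ j : Fin n, T^[(j : ℕ)] ⁻¹' f j)

/-- Static entropy of a finite partition. -/
noncomputable def partEntropy [MeasurableSpace X] (μ : Measure X) (P : Finset (Set X)) : ℝ :=
  ∑ A ∈ P, Real.negMulLog (μ A).toReal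

/-- Kolmogorov–Sinai entropy of `T` w.r.t. the partition `P`. -/
noncomputable def ksEntropyPart [MeasurableSpace X] (T : X → X) (μ : Measure X)
    (P : Finset (Set X)) : ℝ :=
  limsup (fun n => partEntropy μ (joinPart T P n) / n) atTop

/-- Kolmogorov–Sinai entropy of `(X,T,μ)`. -/
noncomputable def ksEntropy [MeasurableSpace X] (T : X → X) (μ : Measure X) : ℝ≥0∞ :=
  ⨆ (P : Finset (Set X)) (_ : IsMeasPartition P), ENNReal.ofReal (ksEntropyPart T μ P)

/-- `N_μ(V, c)`: the minimal cardinality of a subfamily of `V` whose union has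
measure at least `c`. -/
noncomputable def coverNum [MeasurableSpace X] (μ : Measure X) (V : Finset (Set X)) (c : ℝ) : ℕ :=
  sInf {k | ∃ W : Finset (Set X), W ⊆ V ∧ W.card = k ∧ ENNReal.ofReal c ≤ μ (⋃ A ∈ W, A)}

/-- Shapira's entropy of the open cover `U` at level `δ`. -/
noncomputable def shapiraEnt [MeasurableSpace X] (T : X → X) (μ : Measure X)
    (U : Finset (Set X)) (δ : ℝ) : ℝ :=
  limsup (fun n => Real.log (coverNum μ (joinPart T U n) δ) / n) atTop

/-- `R_μ^δ(T,n,ε)`: minimal number of Bowen `(n,ε)`-balls whose union has measure `> 1 - δ`. -/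
noncomputable def katokCovNum [MeasurableSpace X] (T : X → X) (μ : Measure X) (n : ℕ)
    (ε δ : ℝ) : ℕ :=
  sInf {k | ∃ E : Finset X, E.card = k ∧
    1 - ENNReal.ofReal δ < μ (⋃ x ∈ E, bowenBall T n x ε)}

/-- Upper Katok `ε`-entropy at level `δ`. -/
noncomputable def katokUpperδ [MeasurableSpace X] (T : X → X) (μ : Measure X) (ε δ : ℝ) : ℝ≥0∞ :=
  limsup (fun n => ENNReal.ofReal (Real.log (katokCovNum T μ n ε δ)) / n) atTop

/-- Lower Katok `ε`-entropy at level `δ`. -/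
noncomputable def katokLowerδ [MeasurableSpace X] (T : X → X) (μ : Measure X) (ε δ : ℝ) : ℝ≥0∞ :=
  liminf (fun n => ENNReal.ofReal (Real.log (katokCovNum T μ n ε δ)) / n) atTop

/-- Upper Katok `ε`-entropy: the limit of `katokUpperδ` as `δ → 0`. -/
noncomputable def katokUpper [MeasurableSpace X] (T : X → X) (μ : Measure X) (ε : ℝ) : ℝ≥0∞ :=
  ⨆ δ ∈ Set.Ioo (0 : ℝ) 1, katokUpperδ T μ ε δ

/-- Lower Katok `ε`-entropy: the limit of `katokLowerδ` as `δ → 0`. -/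
noncomputable def katokLower [MeasurableSpace X] (T : X → X) (μ : Measure X) (ε : ℝ) : ℝ≥0∞ :=
  ⨆ δ ∈ Set.Ioo (0 : ℝ) 1, katokLowerδ T μ ε δ

/-- `-log μ(S)`, as an extended nonnegative real (`∞` when `μ S = 0`). -/
noncomputable def negLogMeas [MeasurableSpace X] (μ : Measure X) (S : Set X) : ℝ≥0∞ :=
  if μ S = 0 then ⊤ else ENNReal.ofReal (-Real.log (μ S).toReal)

/-- Upper Brin–Katok local `ε`-entropy of `μ`. -/
noncomputable def bkUpper [MeasurableSpace X] (T : X → X) (μ : Measure X) (ε : ℝ) : ℝ≥0∞ :=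
  ∫⁻ x, limsup (fun n => negLogMeas μ (bowenBall T n x ε) / n) atTop ∂μ

/-- Lower Brin–Katok local `ε`-entropy of `μ`. -/
noncomputable def bkLower [MeasurableSpace X] (T : X → X) (μ : Measure X) (ε : ℝ) : ℝ≥0∞ :=
  ∫⁻ x, liminf (fun n => negLogMeas μ (bowenBall T n x ε) / n) atTop ∂μ

/-- `∑ e^{-s n_i}` over a family of (center, order) pairs. -/
noncomputable def weightSum (s : ℝ) (I : Set (X × ℕ)) : ℝ≥0∞ :=
  ∑' p : I, ENNReal.ofReal (Real.exp (-(s * ((p : X × ℕ).2 : ℝ))))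

/-- Carathéodory–Pesin Bowen pre-measure `M(T,d,Z,s,N,ε)`. -/
noncomputable def bowenPre (T : X → X) (Z : Set X) (s : ℝ) (N : ℕ) (ε : ℝ) : ℝ≥0∞ :=
  ⨅ (I : Set (X × ℕ)) (_ : I.Countable ∧ (∀ p ∈ I, N ≤ p.2) ∧
      Z ⊆ ⋃ p ∈ I, bowenBall T p.2 p.1 ε), weightSum s I

/-- `M(T,d,Z,s,ε) = lim_{N→∞} M(T,d,Z,s,N,ε)`. -/
noncomputable def bowenCP (T : X → X) (Z : Set X) (s : ℝ) (ε : ℝ) : ℝ≥0∞ :=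
  ⨆ N, bowenPre T Z s N ε

/-- Bowen `ε`-entropy of the subset `Z`: the critical value of `s ↦ M(T,d,Z,s,ε)`. -/
noncomputable def bowenEnt (T : X → X) (Z : Set X) (ε : ℝ) : ℝ≥0∞ :=
  sInf {a : ℝ≥0∞ | ∃ s : ℝ, 0 ≤ s ∧ a = ENNReal.ofReal s ∧ bowenCP T Z s ε = 0}

/-- Packing pre-measure `P(T,d,Z,s,N,ε)`: supremum of `∑ e^{-n_i s}` over pairwise disjoint
families of closed Bowen balls with centers in `Z` and orders `≥ N`. -/
noncomputable def packPre (T : X → X) (Z : Set X) (s : ℝ) (N : ℕ) (ε : ℝ) : ℝ≥0∞ :=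
  ⨆ (I : Set (X × ℕ)) (_ : I.Countable ∧ (∀ p ∈ I, N ≤ p.2 ∧ p.1 ∈ Z) ∧
      I.PairwiseDisjoint (fun p => bowenClosedBall T p.2 p.1 ε)), weightSum s I

/-- `P(T,d,Z,s,ε) = lim_{N→∞} P(T,d,Z,s,N,ε)`. -/
noncomputable def packCP (T : X → X) (Z : Set X) (s : ℝ) (ε : ℝ) : ℝ≥0∞ :=
  ⨅ N, packPre T Z s N ε

/-- `𝒫(T,d,Z,s,ε) = inf {∑_i P(T,d,Z_i,s,ε) : Z ⊆ ⋃ Z_i}`. -/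
noncomputable def packOuter (T : X → X) (Z : Set X) (s : ℝ) (ε : ℝ) : ℝ≥0∞ :=
  ⨅ (Zs : ℕ → Set X) (_ : Z ⊆ ⋃ i, Zs i), ∑' i, packCP T (Zs i) s ε

/-- Packing `ε`-entropy of the subset `Z`: critical value of `s ↦ 𝒫(T,d,Z,s,ε)`. -/
noncomputable def packEnt (T : X → X) (Z : Set X) (ε : ℝ) : ℝ≥0∞ :=
  sInf {a : ℝ≥0∞ | ∃ s : ℝ, 0 ≤ s ∧ a = ENNReal.ofReal s ∧ packOuter T Z s ε = 0}

/-- Packing topological entropy of a subset: `lim_{ε → 0} h_top^P(T,Z,d,ε)`. -/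
noncomputable def packEntTotal (T : X → X) (Z : Set X) : ℝ≥0∞ :=
  ⨆ (ε : ℝ) (_ : 0 < ε), packEnt T Z ε

/-- Katok-type Bowen pre-measure `M^δ(T,d,μ,s,N,ε)` for a measure `μ`. -/
noncomputable def bowenPreMeas [MeasurableSpace X] (T : X → X) (μ : Measure X) (s : ℝ)
    (N : ℕ) (ε δ : ℝ) : ℝ≥0∞ :=
  ⨅ (I : Set (X × ℕ)) (_ : I.Countable ∧ (∀ p ∈ I, N ≤ p.2) ∧
      1 - ENNReal.ofReal δ < μ (⋃ p ∈ I, bowenBall T p.2 p.1 ε)), weightSum s I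

/-- The critical value `M^δ(T,d,μ,ε)`. -/
noncomputable def bowenEntMeasδ [MeasurableSpace X] (T : X → X) (μ : Measure X)
    (ε δ : ℝ) : ℝ≥0∞ :=
  sInf {a : ℝ≥0∞ | ∃ s : ℝ, 0 ≤ s ∧ a = ENNReal.ofReal s ∧
    (⨆ N, bowenPreMeas T μ s N ε δ) = 0}

/-- `M_μ(T,d,ε) = lim_{δ → 0} M^δ(T,d,μ,ε)`. -/
noncomputable def bowenEntMeas [MeasurableSpace X] (T : X → X) (μ : Measure X) (ε : ℝ) : ℝ≥0∞ :=
  ⨆ δ ∈ Set.Ioo (0 : ℝ) 1, bowenEntMeasδ T μ ε δ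

/-- `𝒫^δ(T,d,μ,s,ε) = inf {∑_i P(T,d,Z_i,s,ε) : μ(⋃ Z_i) > 1 - δ}`. -/
noncomputable def packOuterMeas [MeasurableSpace X] (T : X → X) (μ : Measure X) (s : ℝ)
    (ε δ : ℝ) : ℝ≥0∞ :=
  ⨅ (Zs : ℕ → Set X) (_ : 1 - ENNReal.ofReal δ < μ (⋃ i, Zs i)), ∑' i, packCP T (Zs i) s ε

/-- The critical value `𝒫^δ(T,d,μ,ε)`. -/
noncomputable def packEntMeasδ [MeasurableSpace X] (T : X → X) (μ : Measure X)
    (ε δ : ℝ) : ℝ≥0∞ :=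
  sInf {a : ℝ≥0∞ | ∃ s : ℝ, 0 ≤ s ∧ a = ENNReal.ofReal s ∧ packOuterMeas T μ s ε δ = 0}

/-- `𝒫_μ(T,d,ε) = lim_{δ → 0} 𝒫^δ(T,d,μ,ε)`. -/
noncomputable def packEntMeas [MeasurableSpace X] (T : X → X) (μ : Measure X) (ε : ℝ) : ℝ≥0∞ :=
  ⨆ δ ∈ Set.Ioo (0 : ℝ) 1, packEntMeasδ T μ ε δ

/-- The `n`-th empirical measure `(1/n) ∑_{j=0}^{n-1} δ_{T^j x}`. -/
noncomputable def empMeas [MeasurableSpace X] (T : X → X) (x : X) (n : ℕ) : Measure X :=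
  (n : ℝ≥0∞)⁻¹ • ∑ j ∈ Finset.range n, Measure.dirac (T^[j] x)

set_option linter.unusedSectionVars false in
lemma empMeas_finite [MeasurableSpace X] (T : X → X) (x : X) (n : ℕ) :
    IsFiniteMeasure (empMeas T x n) := by
  refine ⟨?_⟩
  have h : (∑ j ∈ Finset.range n, Measure.dirac (T^[j] x)) Set.univ = n := by
    rw [Measure.finset_sum_apply]
    simp
  rw [empMeas, Measure.smul_apply, smul_eq_mul, h]
  rcases eq_or_ne (n : ℝ≥0∞) 0 with h0 | h0
  · simp [h0]
  · rw [ENNReal.inv_mul_cancel h0 (by simp)]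
    exact ENNReal.one_lt_top

/-- The `n`-th empirical measure as a finite measure. -/
noncomputable def empFM [MeasurableSpace X] (T : X → X) (x : X) (n : ℕ) : FiniteMeasure X :=
  ⟨empMeas T x n, empMeas_finite T x n⟩

/-- The set of generic points of `μ`: points whose empirical measures converge weakly to `μ`. -/
def genPts [MeasurableSpace X] [OpensMeasurableSpace X] (T : X → X) (μ : Measure X) [IsFiniteMeasure μ] : Set X :=
  {x | Tendsto (fun n => empFM T x n) atTop (𝓝 (⟨μ, ‹_›⟩ : FiniteMeasure X))}

/-- `X_{n,F}`: points whose `n`-th empirical measure lies in `F`. -/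
def XnF [MeasurableSpace X] [OpensMeasurableSpace X] (T : X → X) (F : Set (FiniteMeasure X)) (n : ℕ) : Set X :=
  {x | empFM T x n ∈ F}

/-- Pfister–Sullivan `ε`-entropy of `μ`. -/
noncomputable def psEnt [MeasurableSpace X] [OpensMeasurableSpace X] (T : X → X) (μ : Measure X) [IsFiniteMeasure μ]
    (ε : ℝ) : ℝ≥0∞ :=
  ⨅ (F : Set (FiniteMeasure X)) (_ : F ∈ (𝓝 (⟨μ, ‹_›⟩ : FiniteMeasure X) : Filter (FiniteMeasure X))),
    limsup (fun n => ENNReal.ofReal (Real.log (sepNum T n ε (XnF T F n)) / n)) atTop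

/-- `limsup_{ε → 0⁺} f(ε)/log(1/ε)`. -/
noncomputable def mmUpper (f : ℝ → ℝ≥0∞) : ℝ≥0∞ :=
  limsup (fun ε : ℝ => f ε / ENNReal.ofReal (Real.log (1 / ε))) (𝓝[>] (0 : ℝ))

/-- `liminf_{ε → 0⁺} f(ε)/log(1/ε)`. -/
noncomputable def mmLower (f : ℝ → ℝ≥0∞) : ℝ≥0∞ :=
  liminf (fun ε : ℝ => f ε / ENNReal.ofReal (Real.log (1 / ε))) (𝓝[>] (0 : ℝ))

/-- Bowen upper metric mean dimension of a subset. -/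
noncomputable def mdimBUpper (T : X → X) (Z : Set X) : ℝ≥0∞ :=
  mmUpper (fun ε => bowenEnt T Z ε)

/-- Packing upper metric mean dimension of a subset. -/
noncomputable def mdimPUpper (T : X → X) (Z : Set X) : ℝ≥0∞ :=
  mmUpper (fun ε => packEnt T Z ε)

/-- Packing lower metric mean dimension of a subset. -/
noncomputable def mdimPLower (T : X → X) (Z : Set X) : ℝ≥0∞ :=
  mmLower (fun ε => packEnt T Z ε)

lemma isOpenCover_image_ball {s : Finset X} {r : ℝ} (hs : (univ : Set X) ⊆ ⋃ c ∈ s, ball c r) :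
    IsOpenCover (s.image (ball · r)) := by
  refine ⟨by simp [isOpen_ball], univ_subset_iff.1 ?_⟩
  simpa only [Finset.set_biUnion_finset_image] using hs

lemma ediam_ball_le_ofReal_two_mul {Y : Type*} [PseudoMetricSpace Y] (c : Y) (r : ℝ) :
    ediam (ball c r) ≤ ENNReal.ofReal (2 * r) :=
  ediam_le_of_forall_dist_le fun _ hx _ hy =>
    (dist_triangle_right _ _ c).trans (by linarith [mem_ball.1 hx, mem_ball.1 hy])

/-- every compact metric space admits a finite open cover with diameter at most
`ε` and Lebesgue number at least `ε/4`. -/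
theorem stmt_2 {X : Type*} [MetricSpace X] [CompactSpace X] (ε : ℝ) (hε : 0 < ε) :
    ∃ U : Finset (Set X), IsOpenCover U ∧ (∀ A ∈ U, EMetric.diam A ≤ ENNReal.ofReal ε) ∧
      ∀ x : X, ∃ A ∈ U, Metric.ball x (ε / 4) ⊆ A := by
  obtain ⟨s, -, hs⟩ := (isCompact_univ (X := X)).elim_nhds_subcover (ball · (ε / 4))
    fun c _ => ball_mem_nhds c (by positivity)
  refine ⟨s.image (ball · (ε / 2)), isOpenCover_image_ball ?_, ?_, fun x => ?_⟩
  · exact hs.trans (iUnion₂_mono fun c _ => ball_subset_ball (by linarith))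
  · simp only [Finset.forall_mem_image]
    exact fun c _ => (ediam_ball_le_ofReal_two_mul c (ε / 2)).trans_eq (by ring_nf)
  · obtain ⟨c, hc, hxc⟩ := mem_iUnion₂.1 (hs (mem_univ x))
    exact ⟨ball c (ε / 2), Finset.mem_image_of_mem _ hc,
      ball_subset_ball' (by linarith [mem_ball.1 hxc])⟩
end

section
/- Let (X,T) be a topological dynamical system with metric d and μ a Borel probability measure. For every ε > 0 and δ ∈ (0,1), if U is a finite open cover with Lebesgue number at least ε/4, then N_μ(U^n, 1−δ) ≤ R_μ^δ(T, n, ε/4) for all n, where N_μ(U^n, 1−δ) is the minimal cardinality of a subfamily of U^n whose union has μ-measure at least 1−δ, and R_μ^δ(T,n,ε/4) is the minimal cardinality of a set E ⊂ X with μ(∪_{x∈E} B_n(x, ε/4)) > 1−δ. -/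
open MeasureTheory Filter Set Metric Topology ENNReal

variable {X : Type*} [MetricSpace X]

/-! If `r` is a Lebesgue number of `U`, choose `A_j ∈ U` containing `ball (T^j x) r`; then
`B_n(x, r) ⊆ ⋂_j T^{-j} A_j ∈ U^n`. Hence every family of Bowen balls realising `R_μ^δ(T, n, r)`
is refined by at most as many members of `U^n`, covering at least as much measure. -/

section BowenBall

variable {T : X → X} {n : ℕ} {x y : X} {ε : ℝ}

lemma dist_iterate_le_bowenDist {j : ℕ} (hj : j < n) :
    dist (T^[j] x) (T^[j] y) ≤ bowenDist T n x y := by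
  have hbdd : BddAbove (Set.range fun i => ⨆ _ : i ∈ Finset.range n, dist (T^[i] x) (T^[i] y)) :=
    ⟨∑ k ∈ Finset.range n, dist (T^[k] x) (T^[k] y), forall_mem_range.2 fun i =>
      Real.iSup_le (fun hi => Finset.single_le_sum (f := fun k => dist (T^[k] x) (T^[k] y))
        (fun k _ => dist_nonneg) hi)
        (Finset.sum_nonneg fun k _ => dist_nonneg)⟩
  exact le_ciSup_of_le hbdd j (by simp [hj])

lemma bowenDist_le_of_forall {c : ℝ} (hc : 0 ≤ c) (h : ∀ j < n, dist (T^[j] x) (T^[j] y) ≤ c) :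
    bowenDist T n x y ≤ c :=
  Real.iSup_le (fun j => Real.iSup_le (fun hj => h j (Finset.mem_range.1 hj)) hc) hc

lemma dist_iterate_lt_of_mem_bowenBall {j : ℕ} (hy : y ∈ bowenBall T n x ε) (hj : j < n) :
    dist (T^[j] x) (T^[j] y) < ε :=
  (dist_iterate_le_bowenDist hj).trans_lt hy

lemma mem_bowenBall_iff (hε : 0 < ε) :
    y ∈ bowenBall T n x ε ↔ ∀ j < n, dist (T^[j] x) (T^[j] y) < ε := by
  refine ⟨fun hy j hj => dist_iterate_lt_of_mem_bowenBall hy hj, fun h => ?_⟩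
  obtain ⟨c, hc0, hcε, hc⟩ : ∃ c, 0 ≤ c ∧ c < ε ∧ ∀ j < n, dist (T^[j] x) (T^[j] y) ≤ c := by
    rcases Nat.eq_zero_or_pos n with rfl | hn
    · exact ⟨0, le_rfl, hε, fun j hj => absurd hj (Nat.not_lt_zero j)⟩
    · obtain ⟨i, hi, hmax⟩ := (Finset.range n).exists_max_image
        (fun j => dist (T^[j] x) (T^[j] y)) ⟨0, Finset.mem_range.2 hn⟩
      exact ⟨_, dist_nonneg, h i (Finset.mem_range.1 hi),
        fun j hj => hmax j (Finset.mem_range.2 hj)⟩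
  exact (bowenDist_le_of_forall hc0 hc).trans_lt hcε

lemma mem_bowenBall_self (hε : 0 < ε) : x ∈ bowenBall T n x ε :=
  (mem_bowenBall_iff hε).2 fun j _ => by simpa using hε

lemma bowenBall_eq_biInter (hε : 0 < ε) :
    bowenBall T n x ε = ⋂ j ∈ Finset.range n, T^[j] ⁻¹' ball (T^[j] x) ε := by
  ext y
  simp only [mem_bowenBall_iff hε, mem_iInter, Finset.mem_range, mem_preimage, mem_ball']

lemma isOpen_bowenBall (hT : Continuous T) (hε : 0 < ε) : IsOpen (bowenBall T n x ε) := by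
  rw [bowenBall_eq_biInter hε]
  exact isOpen_biInter_finset fun j _ => isOpen_ball.preimage (hT.iterate j)

lemma exists_finset_iUnion_bowenBall_eq_univ [CompactSpace X] (hT : Continuous T) (hε : 0 < ε)
    (n : ℕ) : ∃ E : Finset X, ⋃ x ∈ E, bowenBall T n x ε = univ := by
  obtain ⟨E, -, hE⟩ := isCompact_univ.elim_nhds_subcover (fun x => bowenBall T n x ε)
    fun x _ => (isOpen_bowenBall hT hε).mem_nhds (mem_bowenBall_self hε)
  exact ⟨E, univ_subset_iff.1 hE⟩

lemma exists_bowenBall_subset_mem_joinPart {U : Finset (Set X)}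
    (hLeb : ∀ x, ∃ A ∈ U, ball x ε ⊆ A) (n : ℕ) (x : X) :
    ∃ V ∈ joinPart T U n, bowenBall T n x ε ⊆ V := by
  choose A hAU hA using hLeb
  refine ⟨⋂ j : Fin n, T^[j] ⁻¹' A (T^[j] x), ?_, fun y hy => mem_iInter.2 fun j => ?_⟩
  · unfold joinPart
    exact Finset.mem_image.2 ⟨fun j => A (T^[j] x), Fintype.mem_piFinset.2 fun _ => hAU _, rfl⟩
  · exact hA _ (mem_ball'.2 (dist_iterate_lt_of_mem_bowenBall hy j.isLt))

end BowenBall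

lemma coverNum_le_card_of_refines {α ι : Type*} [MeasurableSpace α] {μ : Measure α}
    {𝒱 : Finset (Set α)} {c : ℝ} {F : ι → Set α} (hF : ∀ i, ∃ V ∈ 𝒱, F i ⊆ V) (E : Finset ι)
    (hE : ENNReal.ofReal c ≤ μ (⋃ i ∈ E, F i)) :
    coverNum μ 𝒱 c ≤ E.card := by
  classical
  choose g hg𝒱 hFg using hF
  calc coverNum μ 𝒱 c ≤ (E.image g).card := Nat.sInf_le ⟨E.image g, ?_, rfl, ?_⟩
    _ ≤ E.card := Finset.card_image_le
  · intro V hV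
    obtain ⟨i, -, rfl⟩ := Finset.mem_image.1 hV
    exact hg𝒱 i
  · refine hE.trans (measure_mono (iUnion₂_subset fun i hi z hz => ?_))
    exact mem_iUnion₂.2 ⟨g i, Finset.mem_image_of_mem g hi, hFg i hz⟩

/-- Compactness makes the set defining `katokCovNum` nonempty, so its `sInf` is attained (and is not
the junk value of an empty `sInf`). -/
lemma exists_card_eq_katokCovNum [CompactSpace X] [MeasurableSpace X] {μ : Measure X}
    [IsProbabilityMeasure μ] {T : X → X} (hT : Continuous T) (n : ℕ) {ε δ : ℝ} (hε : 0 < ε) (hδ : 0 < δ) :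
    ∃ E : Finset X, E.card = katokCovNum T μ n ε δ ∧
      1 - ENNReal.ofReal δ < μ (⋃ x ∈ E, bowenBall T n x ε) := by
  obtain ⟨E, hE⟩ := exists_finset_iUnion_bowenBall_eq_univ hT hε n
  refine Nat.sInf_mem (s := {k | ∃ E : Finset X, E.card = k ∧
    1 - ENNReal.ofReal δ < μ (⋃ x ∈ E, bowenBall T n x ε)}) ⟨E.card, E, rfl, ?_⟩
  rw [hE, measure_univ]
  exact ENNReal.sub_lt_self one_ne_top one_ne_zero (ENNReal.ofReal_pos.2 hδ).ne'

theorem stmt_3_general {X : Type*} [MetricSpace X] [CompactSpace X] [MeasurableSpace X]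
    (T : X → X) (hT : Continuous T) (μ : Measure X) [IsProbabilityMeasure μ]
    (ε δ : ℝ) (hε : 0 < ε) (hδ : δ ∈ Set.Ioo (0 : ℝ) 1)
    (U : Finset (Set X))
    (hLeb : ∀ x : X, ∃ A ∈ U, Metric.ball x (ε / 4) ⊆ A) :
    ∀ n : ℕ, coverNum μ (joinPart T U n) (1 - δ) ≤ katokCovNum T μ n (ε / 4) δ := by
  intro n
  obtain ⟨E, hEcard, hE⟩ :=
    exists_card_eq_katokCovNum (μ := μ) (ε := ε / 4) hT n (by positivity) hδ.1
  rw [← hEcard]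
  refine coverNum_le_card_of_refines (exists_bowenBall_subset_mem_joinPart hLeb n) E ?_
  rw [ENNReal.ofReal_sub _ hδ.1.le, ENNReal.ofReal_one]
  exact hE.le

/-- if `U` has Lebesgue number at least `ε/4` then
`N_μ(U^n, 1-δ) ≤ R_μ^δ(T,n,ε/4)` for all `n`. -/
theorem stmt_3 {X : Type*} [MetricSpace X] [CompactSpace X] [MeasurableSpace X] [BorelSpace X]
    (T : X → X) (hT : Continuous T) (μ : Measure X) [IsProbabilityMeasure μ]
    (ε δ : ℝ) (hε : 0 < ε) (hδ : δ ∈ Set.Ioo (0 : ℝ) 1)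
    (U : Finset (Set X)) (hU : IsOpenCover U)
    (hLeb : ∀ x : X, ∃ A ∈ U, Metric.ball x (ε / 4) ⊆ A) :
    ∀ n : ℕ, coverNum μ (joinPart T U n) (1 - δ) ≤ katokCovNum T μ n (ε / 4) δ :=
  stmt_3_general T hT μ ε δ hε hδ U hLeb
end
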